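/- arXiv:2402.05539 — 2 statements merged into one kernel-verified Lean document; each statement's English description precedes it below -/
import Mathlib

section
/- The center of the Drinfeld–Kohno Lie algebra 𝔱_3 is one-dimensional and generated by c := t_{12} + t_{13} + t_{23}; that is, the center of 𝔱_3 equals the k-linear span of c. -/
/-! Drinfeld–Kohno Lie algebra 𝔱_n and insertion-coproduct morphisms. -/

open FreeLieAlgebra

variable (k : Type) [Field k] [CharZero k]

/-- Generators `t_{ij}` of the Drinfeld–Kohno Lie algebra: pairs `(i, j)` with `i ≠ j`. -/
def DKGen (n : ℕ) : Type := {p : Fin n × Fin n // p.1 ≠ p.2}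

/-- The generator `t_{ij}` in the free Lie algebra (junk value `0` if `i = j`). -/
noncomputable def dkOf (n : ℕ) (i j : Fin n) : FreeLieAlgebra k (DKGen n) :=
  if h : i ≠ j then FreeLieAlgebra.of k (⟨(i, j), h⟩ : DKGen n) else 0

/-- The set of defining relations of the Drinfeld–Kohno Lie algebra. -/
def DKRels (n : ℕ) : Set (FreeLieAlgebra k (DKGen n)) :=
  {x | ∃ i j : Fin n, i ≠ j ∧ x = dkOf k n i j - dkOf k n j i} ∪
  {x | ∃ i j l : Fin n, i ≠ j ∧ i ≠ l ∧ j ≠ l ∧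
      x = ⁅dkOf k n i j, dkOf k n i l + dkOf k n l j⁆} ∪
  {x | ∃ i j l m : Fin n, i ≠ j ∧ i ≠ l ∧ i ≠ m ∧ j ≠ l ∧ j ≠ m ∧ l ≠ m ∧
      x = ⁅dkOf k n i j, dkOf k n l m⁆}

/-- The Lie ideal generated by the Drinfeld–Kohno relations. -/
noncomputable def DKIdeal (n : ℕ) : LieIdeal k (FreeLieAlgebra k (DKGen n)) :=
  LieSubmodule.lieSpan k (FreeLieAlgebra k (DKGen n)) (DKRels k n)

/-- The Drinfeld–Kohno Lie algebra `𝔱_n`. -/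
noncomputable def DK (n : ℕ) : Type :=
  FreeLieAlgebra k (DKGen n) ⧸ DKIdeal k n

noncomputable instance (n : ℕ) : LieRing (DK k n) :=
  inferInstanceAs (LieRing (FreeLieAlgebra k (DKGen n) ⧸ DKIdeal k n))

noncomputable instance (n : ℕ) : LieAlgebra k (DK k n) :=
  inferInstanceAs (LieAlgebra k (FreeLieAlgebra k (DKGen n) ⧸ DKIdeal k n))

/-- The generator `t_{ij}` of the Drinfeld–Kohno Lie algebra `𝔱_n`. -/
noncomputable def T (n : ℕ) (i j : Fin n) : DK k n :=
  LieSubmodule.Quotient.mk' (DKIdeal k n) (dkOf k n i j)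


set_option linter.unusedSectionVars false
set_option maxHeartbeats 1600000

attribute [local instance] LieRing.ofAssociativeRing

section FreeLieTools

theorem freeLie_lieSpan_top (X : Type) :
    LieSubalgebra.lieSpan k (FreeLieAlgebra k X) (Set.range (of k)) = ⊤ := by
  refine top_unique fun z _ => ?_
  set S := LieSubalgebra.lieSpan k (FreeLieAlgebra k X) (Set.range (of k)) with hS
  let g : FreeLieAlgebra k X →ₗ⁅k⁆ S :=
    lift k fun x => ⟨of k x, LieSubalgebra.subset_lieSpan ⟨x, rfl⟩⟩
  have h : S.incl.comp g = LieHom.id := by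
    apply hom_ext
    intro x
    simp [g, lift_of_apply]
  have : S.incl (g z) = z := by
    have := LieHom.congr_fun h z
    simpa using this
  rw [← this]
  exact (g z).2

/-- Useful induction-style consequence. -/
theorem freeLie_mem_lieSubalgebra {X : Type} (S : LieSubalgebra k (FreeLieAlgebra k X))
    (h : ∀ x, of k x ∈ S) (z : FreeLieAlgebra k X) : z ∈ S := by
  have hz : z ∈ LieSubalgebra.lieSpan k (FreeLieAlgebra k X) (Set.range (of k)) := by
    rw [freeLie_lieSpan_top]; trivial
  exact LieSubalgebra.lieSpan_le.mpr (by rintro _ ⟨x, rfl⟩; exact h x) hz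

abbrev FL := FreeLieAlgebra k (Fin 2)
abbrev MA := MonoidAlgebra k (FreeMonoid (Fin 2))

instance : CoeFun (MA k) (fun _ => FreeMonoid (Fin 2) → k) := ⟨fun a => a.coeff⟩

noncomputable def fM : FL k →ₗ⁅k⁆ MA k :=
  lift k fun i => MonoidAlgebra.single (FreeMonoid.of i) 1

noncomputable def dynList : List (Fin 2) → FL k
  | [] => 0
  | a :: t => t.foldl (fun acc x => ⁅acc, of k x⁆) (of k a)

noncomputable def dyn0 (w : FreeMonoid (Fin 2)) : FL k := dynList k (FreeMonoid.toList w)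

theorem dyn0_one : dyn0 k 1 = 0 := rfl

theorem dyn0_of (x : Fin 2) : dyn0 k (FreeMonoid.of x) = of k x := rfl

theorem dyn0_concat (w : FreeMonoid (Fin 2)) (hw : w ≠ 1) (x : Fin 2) :
    dyn0 k (w * FreeMonoid.of x) = ⁅dyn0 k w, of k x⁆ := by
  obtain ⟨l, rfl⟩ := FreeMonoid.toList.symm.surjective w
  cases l with
  | nil => simp at hw
  | cons a t =>
    show dynList k (FreeMonoid.toList (FreeMonoid.ofList (a :: t) * FreeMonoid.of x)) = _
    rw [show FreeMonoid.toList (FreeMonoid.ofList (a :: t) * FreeMonoid.of x)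
        = a :: (t ++ [x]) by simp]
    show (t ++ [x]).foldl _ (of k a) = _
    rw [List.foldl_append]
    rfl

noncomputable def Dyn : MA k →ₗ[k] FL k :=
  (Finsupp.lsum k fun w => LinearMap.toSpanSingleton k (FL k) (dyn0 k w)) ∘ₗ
    (MonoidAlgebra.coeffLinearEquiv k).toLinearMap

@[simp] theorem Dyn_single (w : FreeMonoid (Fin 2)) (c : k) :
    Dyn k (MonoidAlgebra.single w c) = c • dyn0 k w := by
  have := Finsupp.lsum_single (R := k) (S := k)
    (fun w => LinearMap.toSpanSingleton k (FL k) (dyn0 k w)) w c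
  show Finsupp.lsum k (fun w => LinearMap.toSpanSingleton k (FL k) (dyn0 k w))
    (Finsupp.single w c) = _
  rw [this]
  rw [LinearMap.toSpanSingleton_apply]

theorem fm_mul_eq_one (x y : FreeMonoid (Fin 2)) : x * y = 1 ↔ x = 1 ∧ y = 1 := by
  constructor
  · intro h
    have h' := congrArg FreeMonoid.toList h
    simp only [FreeMonoid.toList_mul] at h'
    rcases List.append_eq_nil_iff.mp h' with ⟨h1, h2⟩
    refine ⟨FreeMonoid.toList.injective ?_, FreeMonoid.toList.injective ?_⟩ <;>
      simp [h1, h2]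
  · rintro ⟨rfl, rfl⟩; simp

theorem mul_apply_one' (a b : MA k) : (a * b) 1 = a 1 * b 1 := by
  classical
  induction a using MonoidAlgebra.induction_linear with
  | zero => simp
  | add f g hf hg =>
    rw [add_mul]
    rw [MonoidAlgebra.coeff_add, Finsupp.add_apply]
    rw [hf, hg]
    rw [MonoidAlgebra.coeff_add, Finsupp.add_apply]
    ring
  | single u c =>
    induction b using MonoidAlgebra.induction_linear with
    | zero => simp
    | add f g hf hg =>
      rw [mul_add]
      rw [MonoidAlgebra.coeff_add, Finsupp.add_apply]
      rw [hf, hg]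
      rw [MonoidAlgebra.coeff_add, Finsupp.add_apply]
      ring
    | single v d =>
      rw [MonoidAlgebra.single_mul_single]
      show (Finsupp.single (u*v) (c*d)) 1 = (Finsupp.single u c) 1 * (Finsupp.single v d) 1
      rcases eq_or_ne (u * v) 1 with h | h
      · rcases (fm_mul_eq_one u v).mp h with ⟨rfl, rfl⟩
        simp
      · rw [Finsupp.single_eq_of_ne' h]
        rcases (not_and_or.mp (fun hc => h ((fm_mul_eq_one u v).mpr hc))) with h1 | h1 <;>
          rw [Finsupp.single_eq_of_ne' h1] <;> ring

@[simp] theorem fM_of (x : Fin 2) :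
    fM k (of k x) = MonoidAlgebra.single (FreeMonoid.of x) 1 := by
  rw [fM]; exact lift_of_apply _ _

theorem fM_lie (u v : FL k) : fM k ⁅u, v⁆ = fM k u * fM k v - fM k v * fM k u := by
  rw [LieHom.map_lie]; rfl

noncomputable def constFreeSub : LieSubalgebra k (FL k) where
  carrier := {v | fM k v 1 = 0}
  add_mem' := by
    intro a b ha hb
    simp only [Set.mem_setOf_eq] at *
    rw [map_add]
    rw [MonoidAlgebra.coeff_add, Finsupp.add_apply]
    rw [ha, hb, add_zero]
  zero_mem' := by simp only [Set.mem_setOf_eq, map_zero]; rfl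
  smul_mem' := by
    intro c v hv
    simp only [Set.mem_setOf_eq] at *
    rw [map_smul]
    rw [MonoidAlgebra.coeff_smul, Finsupp.smul_apply]
    rw [hv, smul_zero]
  lie_mem' := by
    intro u v hu hv
    simp only [Set.mem_setOf_eq] at *
    rw [fM_lie]
    rw [MonoidAlgebra.coeff_sub, Finsupp.sub_apply]
    rw [mul_apply_one', mul_apply_one', hu, hv]
    ring

theorem fM_apply_one (v : FL k) : fM k v 1 = 0 :=
  freeLie_mem_lieSubalgebra k (constFreeSub k)
    (fun x => by simp only [constFreeSub]; show fM k (of k x) 1 = 0;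
                 rw [fM_of]; exact Finsupp.single_eq_of_ne' (by
                   intro h
                   exact absurd (congrArg FreeMonoid.toList h) (by simp))) v

/-- Auxiliary: multiplication by a single generator, with the constant-term correction. -/
theorem dyn_mul_gen (x : Fin 2) (a : MA k) :
    Dyn k (a * MonoidAlgebra.single (FreeMonoid.of x) 1)
      = ⁅Dyn k a, of k x⁆ + a 1 • of k x := by
  classical
  induction a using MonoidAlgebra.induction_linear with
  | zero => simp
  | add f g hf hg =>
    rw [add_mul, map_add, hf, hg, map_add]
    rw [MonoidAlgebra.coeff_add, Finsupp.add_apply]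
    rw [add_lie, add_smul]
    abel
  | single w c =>
    rw [MonoidAlgebra.single_mul_single, mul_one, Dyn_single, Dyn_single]
    rcases eq_or_ne w 1 with rfl | hw
    · rw [one_mul, dyn0_of, dyn0_one, smul_zero, zero_lie, zero_add]
      rw [show (MonoidAlgebra.single 1 c : MA k) 1 = c from Finsupp.single_eq_same]
    · rw [dyn0_concat k w hw, smul_lie,
        show (MonoidAlgebra.single w c : MA k) 1 = 0 from Finsupp.single_eq_of_ne' hw,
        zero_smul, add_zero]

/-- The key Dynkin bracket lemma. -/
theorem dyn_mul (v : FL k) (a : MA k) (ha : a 1 = 0) :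
    Dyn k (a * fM k v) = ⁅Dyn k a, v⁆ := by
  set S : LieSubalgebra k (FL k) :=
    { carrier := {v | ∀ a : MA k, a 1 = 0 → Dyn k (a * fM k v) = ⁅Dyn k a, v⁆}
      add_mem' := by
        intro u v hu hv
        simp only [Set.mem_setOf_eq] at *
        intro a ha
        rw [map_add, mul_add, map_add, hu a ha, hv a ha, lie_add]
      zero_mem' := by
        simp only [Set.mem_setOf_eq]
        intro a ha
        rw [map_zero, mul_zero, map_zero, lie_zero]
      smul_mem' := by
        intro c v hv
        simp only [Set.mem_setOf_eq] at *
        intro a ha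
        rw [map_smul, mul_smul_comm, map_smul, hv a ha, lie_smul]
      lie_mem' := by
        intro u v hu hv
        simp only [Set.mem_setOf_eq] at *
        intro a ha
        have hau : (a * fM k u) 1 = 0 := by rw [mul_apply_one', ha, zero_mul]
        have hav : (a * fM k v) 1 = 0 := by rw [mul_apply_one', ha, zero_mul]
        rw [fM_lie, mul_sub, ← mul_assoc, ← mul_assoc, map_sub,
          hu (a * fM k v) hav, hv (a * fM k u) hau, hu a ha, hv a ha, leibniz_lie,
          show ⁅u, ⁅Dyn k a, v⁆⁆ = -⁅⁅Dyn k a, v⁆, u⁆ from (lie_skew _ _).symm]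
        abel } with hSdef
  refine freeLie_mem_lieSubalgebra k S (fun x => ?_) v a ha
  intro a ha
  rw [fM_of, dyn_mul_gen, ha, zero_smul, add_zero]

end FreeLieTools

section Grading

inductive Homog : ℕ → FL k → Prop
  | gen (x : Fin 2) : Homog 1 (of k x)
  | br {p q : ℕ} {u v : FL k} : Homog p u → Homog q v → Homog (p + q) ⁅u, v⁆

theorem homog_pos {n : ℕ} {u : FL k} (h : Homog k n u) : 0 < n := by
  induction h with
  | gen x => norm_num
  | br hu hv ihu ihv => omega

noncomputable def Fdeg (n : ℕ) : Submodule k (FL k) := Submodule.span k {u | Homog k n u}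

theorem dyn_fM_homog {n : ℕ} {u : FL k} (h : Homog k n u) :
    Dyn k (fM k u) = (n : k) • u := by
  induction h with
  | gen x =>
    rw [fM_of, Dyn_single, dyn0_of, Nat.cast_one, one_smul]
  | br hu hv ihu ihv =>
    rename_i p q u v
    rw [fM_lie, map_sub, dyn_mul k u (fM k v) (fM_apply_one k v),
      dyn_mul k v (fM k u) (fM_apply_one k u), ihu, ihv, smul_lie, smul_lie,
      show ⁅v, u⁆ = -⁅u, v⁆ from (lie_skew _ _).symm, smul_neg, sub_neg_eq_add,
      Nat.cast_add, add_smul]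

theorem dyn_fM_fdeg {n : ℕ} {u : FL k} (h : u ∈ Fdeg k n) :
    Dyn k (fM k u) = (n : k) • u := by
  induction h using Submodule.span_induction with
  | mem u hu => exact dyn_fM_homog k hu
  | zero => simp
  | add u v hu hv ihu ihv => rw [map_add, map_add, ihu, ihv, smul_add]
  | smul c u hu ihu => rw [map_smul, map_smul, ihu, smul_comm]

theorem fdeg_zero : Fdeg k 0 = ⊥ := by
  rw [Fdeg, show {u : FL k | Homog k 0 u} = ∅ from
    Set.eq_empty_of_forall_notMem fun u hu => by
      exact absurd (homog_pos k hu) (by omega), Submodule.span_empty]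

noncomputable def Mdeg (n : ℕ) : Submodule k (MA k) where
  carrier := {a | ∀ w, a w ≠ 0 → (FreeMonoid.toList w).length = n}
  add_mem' := by
    intro a b ha hb w hw
    rw [MonoidAlgebra.coeff_add, Finsupp.add_apply] at hw
    by_cases h1 : a w = 0
    · exact hb w (by intro h2; rw [h1, h2, add_zero] at hw; exact hw rfl)
    · exact ha w h1
  zero_mem' := by intro w hw; exact absurd rfl hw
  smul_mem' := by
    intro c a ha w hw
    rw [MonoidAlgebra.coeff_smul, Finsupp.smul_apply] at hw
    exact ha w (by intro h; rw [h, smul_zero] at hw; exact hw rfl)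

theorem mdeg_mul {p q : ℕ} {a b : MA k} (ha : a ∈ Mdeg k p) (hb : b ∈ Mdeg k q) :
    a * b ∈ Mdeg k (p + q) := by
  classical
  intro w hw
  rw [MonoidAlgebra.mul_apply] at hw
  obtain ⟨x, hxs, hx⟩ := Finset.exists_ne_zero_of_sum_ne_zero hw
  obtain ⟨y, hys, hy⟩ := Finset.exists_ne_zero_of_sum_ne_zero hx
  have hxy : x * y = w := by
    by_contra hxy
    simp only [if_neg hxy] at hy
    exact hy rfl
  have hax : a x ≠ 0 := Finsupp.mem_support_iff.mp hxs
  have hby : b y ≠ 0 := Finsupp.mem_support_iff.mp hys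
  have := congrArg (fun u => (FreeMonoid.toList u).length) hxy
  simp only [FreeMonoid.toList_mul, List.length_append] at this
  rw [← this, ha x hax, hb y hby]

theorem fM_homog_mdeg {n : ℕ} {u : FL k} (h : Homog k n u) : fM k u ∈ Mdeg k n := by
  induction h with
  | gen x =>
    rw [fM_of]
    intro w hw
    have hne : w = FreeMonoid.of x := by
      by_contra hne
      exact hw (Finsupp.single_eq_of_ne' (Ne.symm hne))
    rw [hne]
    rfl
  | br hu hv ihu ihv =>
    rename_i p q u v
    rw [fM_lie]
    exact sub_mem (mdeg_mul k ihu ihv) (by rw [add_comm]; exact mdeg_mul k ihv ihu)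

theorem fM_fdeg_mdeg {n : ℕ} {u : FL k} (h : u ∈ Fdeg k n) : fM k u ∈ Mdeg k n := by
  induction h using Submodule.span_induction with
  | mem u hu => exact fM_homog_mdeg k hu
  | zero => rw [map_zero]; exact zero_mem _
  | add u v hu hv ihu ihv => rw [map_add]; exact add_mem ihu ihv
  | smul c u hu ihu => rw [map_smul]; exact Submodule.smul_mem _ _ ihu

theorem mdeg_sum_eq_zero {s : Finset ℕ} {a : ℕ → MA k} (h : ∀ n, a n ∈ Mdeg k n)
    (hsum : ∑ n ∈ s, a n = 0) : ∀ n ∈ s, a n = 0 := by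
  intro n hn
  ext w
  rcases eq_or_ne ((FreeMonoid.toList w).length) n with hl | hl
  · have h0 : ∀ m ∈ s, m ≠ n → (a m) w = 0 := by
      intro m hm hmn
      by_contra hne
      exact hmn (by rw [← h m w hne, hl])
    have := congrArg (fun f : MA k => f w) hsum
    rw [MonoidAlgebra.coeff_sum, Finsupp.finset_sum_apply] at this
    rw [Finset.sum_eq_single_of_mem n hn h0] at this
    rw [this]
  · by_contra hne
    exact hl (h n w (by simpa using hne))

noncomputable def FdegSup : LieSubalgebra k (FL k) :=
  { (⨆ n, Fdeg k n : Submodule k (FL k)) with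
    lie_mem' := by
      intro x y hx hy
      have key : ∀ p q : ℕ, ∀ u ∈ Fdeg k p, ∀ v ∈ Fdeg k q,
          ⁅u, v⁆ ∈ Fdeg k (p + q) := by
        intro p q u hu v hv
        induction hu using Submodule.span_induction with
        | mem u hu =>
          induction hv using Submodule.span_induction with
          | mem v hv => exact Submodule.subset_span (Homog.br hu hv)
          | zero => rw [lie_zero]; exact zero_mem _
          | add v w hv hw ihv ihw => rw [lie_add]; exact add_mem ihv ihw
          | smul c v hv ihv => rw [lie_smul]; exact Submodule.smul_mem _ _ ihv
        | zero => rw [zero_lie]; exact zero_mem _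
        | add u w hu hw ihu ihw => rw [add_lie]; exact add_mem ihu ihw
        | smul c u hu ihu => rw [smul_lie]; exact Submodule.smul_mem _ _ ihu
      show ⁅x, y⁆ ∈ (⨆ n, Fdeg k n : Submodule k (FL k))
      have hx' : x ∈ (⨆ n, Fdeg k n : Submodule k (FL k)) := hx
      have hy' : y ∈ (⨆ n, Fdeg k n : Submodule k (FL k)) := hy
      have key2 : ∀ q : ℕ, ∀ v ∈ Fdeg k q,
          ⁅x, v⁆ ∈ (⨆ n, Fdeg k n : Submodule k (FL k)) := by
        intro q v hv
        refine Submodule.iSup_induction (motive := fun u =>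
          ⁅u, v⁆ ∈ (⨆ n, Fdeg k n : Submodule k (FL k))) _ hx' ?_ ?_ ?_
        · intro p u hup
          exact Submodule.mem_iSup_of_mem (p + q) (key p q u hup v hv)
        · show ⁅(0 : FL k), v⁆ ∈ _; rw [zero_lie]; exact zero_mem _
        · intro a b iha ihb
          show ⁅a + b, v⁆ ∈ _
          rw [add_lie]; exact add_mem iha ihb
      refine Submodule.iSup_induction (motive := fun w =>
        ⁅x, w⁆ ∈ (⨆ n, Fdeg k n : Submodule k (FL k))) _ hy' ?_ ?_ ?_
      · intro q v hv; exact key2 q v hv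
      · show ⁅x, (0 : FL k)⁆ ∈ _; rw [lie_zero]; exact zero_mem _
      · intro a b iha ihb
        show ⁅x, a + b⁆ ∈ _
        rw [lie_add]; exact add_mem iha ihb }

theorem mem_iSup_fdeg (z : FL k) : z ∈ (⨆ n, Fdeg k n : Submodule k (FL k)) :=
  freeLie_mem_lieSubalgebra k (FdegSup k)
    (fun x => Submodule.mem_iSup_of_mem 1 (Submodule.subset_span (Homog.gen x))) z

end Grading

section CenterFree

theorem comm_single_eq_zero (z : MA k) (h1 : z 1 = 0)
    (hc : ∀ x : Fin 2, z * MonoidAlgebra.single (FreeMonoid.of x) 1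
      = MonoidAlgebra.single (FreeMonoid.of x) 1 * z) : z = 0 := by
  ext w
  show z w = 0
  obtain ⟨l, rfl⟩ := FreeMonoid.toList.symm.surjective w
  cases l with
  | nil => exact h1
  | cons a t =>
    set w : FreeMonoid (Fin 2) := FreeMonoid.toList.symm (a :: t) with hw
    have htl : FreeMonoid.toList w = a :: t := rfl
    set b : Fin 2 := if a = 0 then 1 else 0 with hb
    have hab : a ≠ b := by
      rcases eq_or_ne a 0 with h | h
      · subst h
        show (0 : Fin 2) ≠ if (0 : Fin 2) = 0 then 1 else 0
        simp
      · show a ≠ if a = 0 then 1 else 0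
        rw [if_neg h]
        exact h
    have hleft : (z * MonoidAlgebra.single (FreeMonoid.of b) 1 : MA k) (w * FreeMonoid.of b)
        = z w * 1 := by
      apply MonoidAlgebra.coeff_mul_single_eq_coeff_mul
      intro c _
      constructor
      · intro h
        have := congrArg FreeMonoid.toList h
        simp only [FreeMonoid.toList_mul] at this
        exact FreeMonoid.toList.injective (List.append_cancel_right this)
      · rintro rfl; rfl
    have hright : (MonoidAlgebra.single (FreeMonoid.of b) 1 * z : MA k) (w * FreeMonoid.of b)
        = 0 := by
      apply MonoidAlgebra.single_mul_apply_of_not_exists_mul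
      rintro ⟨d, hd⟩
      have h2 := congrArg FreeMonoid.toList hd
      simp only [FreeMonoid.toList_mul, htl] at h2
      have hhead : a = b := by
        have h3 : (a :: (t ++ [b])) = b :: FreeMonoid.toList d := by simpa using h2
        exact (List.cons.injEq _ _ _ _ ▸ h3).1
      exact hab hhead
    rw [hc b] at hleft
    rw [hleft, mul_one] at hright
    exact hright

theorem centerFL (z : FL k) (hz : ∀ v : FL k, ⁅z, v⁆ = 0) : z = 0 := by
  classical
  have hfz : fM k z = 0 := by
    apply comm_single_eq_zero k _ (fM_apply_one k z)
    intro x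
    have h0 : fM k ⁅z, of k x⁆ = 0 := by rw [hz (of k x), map_zero]
    rw [fM_lie, fM_of] at h0
    exact sub_eq_zero.mp h0
  obtain ⟨c, hcmem, hcsum⟩ :=
    (Submodule.mem_iSup_iff_exists_finsupp (Fdeg k) z).mp (mem_iSup_fdeg k z)
  have hcomp : ∀ n, fM k (c n) = 0 := by
    have hsum0 : ∑ n ∈ c.support, fM k (c n) = 0 := by
      have h2 : fM k (∑ n ∈ c.support, c n) = 0 := by
        rw [show (∑ n ∈ c.support, c n) = z from hcsum, hfz]
      rw [← h2]
      exact (map_sum ((fM k).toLinearMap) (fun n => c n) c.support).symm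
    intro n
    by_cases hn : n ∈ c.support
    · exact mdeg_sum_eq_zero k (fun m => fM_fdeg_mdeg k (hcmem m)) hsum0 n hn
    · rw [Finsupp.notMem_support_iff.mp hn, map_zero]
  have hzero : ∀ n, c n = 0 := by
    intro n
    have hD := dyn_fM_fdeg k (hcmem n)
    rw [hcomp n, map_zero] at hD
    rcases Nat.eq_zero_or_pos n with rfl | hpos
    · have := hcmem 0
      rw [fdeg_zero k] at this
      simpa using this
    · have hne : (n : k) ≠ 0 := Nat.cast_ne_zero.mpr (by omega)
      exact (smul_eq_zero.mp hD.symm).resolve_left hne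
  rw [← hcsum, Finsupp.sum]
  apply Finset.sum_eq_zero
  intro n _
  exact hzero n

end CenterFree

section DKPart

theorem mkRel {r : FreeLieAlgebra k (DKGen 3)} (hr : r ∈ DKRels k 3) :
    LieSubmodule.Quotient.mk' (DKIdeal k 3) r = 0 := by
  rw [LieSubmodule.Quotient.mk_eq_zero]
  exact LieSubmodule.subset_lieSpan hr

noncomputable def DKmkHom : FreeLieAlgebra k (DKGen 3) →ₗ⁅k⁆ DK k 3 where
  toLinearMap := (LieSubmodule.Quotient.mk' (DKIdeal k 3)).toLinearMap
  map_lie' := by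
    intro x y
    exact (LieSubmodule.Quotient.mk_bracket (DKIdeal k 3) x y)

noncomputable def DKdesc {L : Type} [LieRing L] [LieAlgebra k L] (f : DKGen 3 → L)
    (h : ∀ r ∈ DKRels k 3, (lift k f) r = 0) : DK k 3 →ₗ⁅k⁆ L where
  toLinearMap := Submodule.liftQ (DKIdeal k 3).toSubmodule ((lift k f) :
      FreeLieAlgebra k (DKGen 3) →ₗ⁅k⁆ L).toLinearMap (by
    rw [DKIdeal]
    have hle : LieSubmodule.lieSpan k (FreeLieAlgebra k (DKGen 3)) (DKRels k 3)
        ≤ (lift k f : FreeLieAlgebra k (DKGen 3) →ₗ⁅k⁆ L).ker := by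
      rw [LieSubmodule.lieSpan_le]
      intro r hr
      show r ∈ (lift k f : FreeLieAlgebra k (DKGen 3) →ₗ⁅k⁆ L).ker
      rw [LieHom.mem_ker]
      exact h r hr
    intro x hx
    have := hle hx
    rw [LieHom.mem_ker] at this
    simpa using this)
  map_lie' := by
    rintro ⟨a⟩ ⟨b⟩
    exact (lift k f).map_lie a b

theorem DKdesc_mk {L : Type} [LieRing L] [LieAlgebra k L] (f : DKGen 3 → L)
    (h : ∀ r ∈ DKRels k 3, (lift k f) r = 0) (a : FreeLieAlgebra k (DKGen 3)) :
    DKdesc k f h (LieSubmodule.Quotient.mk' (DKIdeal k 3) a) = lift k f a := by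
  rfl

theorem DKdesc_T {L : Type} [LieRing L] [LieAlgebra k L] (f : DKGen 3 → L)
    (h : ∀ r ∈ DKRels k 3, (lift k f) r = 0) (i j : Fin 3) (hij : i ≠ j) :
    DKdesc k f h (T k 3 i j) = f ⟨(i, j), hij⟩ := by
  erw [T, DKdesc_mk, dkOf, dif_pos hij, lift_of_apply]

end DKPart

section Relations

theorem T_symm (i j : Fin 3) : T k 3 i j = T k 3 j i := by
  rcases eq_or_ne i j with rfl | hij
  · rfl
  · have h := mkRel k (r := dkOf k 3 i j - dkOf k 3 j i)
      (Or.inl (Or.inl ⟨i, j, hij, rfl⟩))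
    rw [map_sub] at h
    have := sub_eq_zero.mp h
    exact this

theorem rel2 (i j l : Fin 3) (hij : i ≠ j) (hil : i ≠ l) (hjl : j ≠ l) :
    ⁅T k 3 i j, T k 3 i l + T k 3 l j⁆ = 0 := by
  have h := mkRel k (r := ⁅dkOf k 3 i j, dkOf k 3 i l + dkOf k 3 l j⁆)
    (Or.inl (Or.inr ⟨i, j, l, hij, hil, hjl, rfl⟩))
  rw [show LieSubmodule.Quotient.mk' (DKIdeal k 3) ⁅dkOf k 3 i j, dkOf k 3 i l + dkOf k 3 l j⁆
      = DKmkHom k ⁅dkOf k 3 i j, dkOf k 3 i l + dkOf k 3 l j⁆ from rfl,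
    LieHom.map_lie, map_add] at h
  exact h

/-- `c = t_{12} + t_{13} + t_{23}`. -/
noncomputable def c3 : DK k 3 := T k 3 0 1 + T k 3 0 2 + T k 3 1 2

private theorem aux_lie1 {L : Type} [LieRing L] (x y z : L) (h : ⁅x, y + z⁆ = 0) :
    ⁅x + y + z, x⁆ = 0 := by
  have h' : ⁅x, y⁆ + ⁅x, z⁆ = 0 := by rwa [lie_add] at h
  rw [add_lie, add_lie, lie_self, zero_add, ← lie_skew y x, ← lie_skew z x,
    ← neg_add, h', neg_zero]

private theorem aux_lie2 {L : Type} [LieRing L] (x y z : L) (h : ⁅y, x + z⁆ = 0) :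
    ⁅x + y + z, y⁆ = 0 := by
  have h' : ⁅y, x⁆ + ⁅y, z⁆ = 0 := by rwa [lie_add] at h
  rw [add_lie, add_lie, lie_self, add_zero, ← lie_skew x y, ← lie_skew z y,
    ← neg_add, h', neg_zero]

private theorem aux_lie3 {L : Type} [LieRing L] (x y z : L) (h : ⁅z, x + y⁆ = 0) :
    ⁅x + y + z, z⁆ = 0 := by
  have h' : ⁅z, x⁆ + ⁅z, y⁆ = 0 := by rwa [lie_add] at h
  rw [add_lie, add_lie, lie_self, add_zero, ← lie_skew x z, ← lie_skew y z,
    ← neg_add, h', neg_zero]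

theorem lie_c3_T01 : ⁅c3 k, T k 3 0 1⁆ = 0 := by
  have r := rel2 k 0 1 2 (by decide) (by decide) (by decide)
  rw [T_symm k 2 1] at r
  exact aux_lie1 _ _ _ r

theorem lie_c3_T02 : ⁅c3 k, T k 3 0 2⁆ = 0 := by
  have r := rel2 k 0 2 1 (by decide) (by decide) (by decide)
  exact aux_lie2 _ _ _ r

theorem lie_c3_T12 : ⁅c3 k, T k 3 1 2⁆ = 0 := by
  have r := rel2 k 1 2 0 (by decide) (by decide) (by decide)
  rw [T_symm k 1 0] at r
  exact aux_lie3 _ _ _ r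

theorem lie_c3_T (i j : Fin 3) (hij : i ≠ j) : ⁅c3 k, T k 3 i j⁆ = 0 := by
  have hv : (i = 0 ∧ j = 1) ∨ (i = 1 ∧ j = 0) ∨ (i = 0 ∧ j = 2) ∨ (i = 2 ∧ j = 0)
      ∨ (i = 1 ∧ j = 2) ∨ (i = 2 ∧ j = 1) := by
    rcases i with ⟨iv, hi⟩; rcases j with ⟨jv, hj⟩
    have hne : iv ≠ jv := fun h => hij (by simp [Fin.ext_iff, h])
    simp only [Fin.ext_iff, Fin.val_zero, Fin.val_one, Fin.val_two]
    omega
  rcases hv with ⟨rfl, rfl⟩|⟨rfl,rfl⟩|⟨rfl,rfl⟩|⟨rfl,rfl⟩|⟨rfl,rfl⟩|⟨rfl,rfl⟩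
  · exact lie_c3_T01 k
  · rw [T_symm k 1 0]; exact lie_c3_T01 k
  · exact lie_c3_T02 k
  · rw [T_symm k 2 0]; exact lie_c3_T02 k
  · exact lie_c3_T12 k
  · rw [T_symm k 2 1]; exact lie_c3_T12 k

theorem c3_central (u : DK k 3) : ⁅c3 k, u⁆ = 0 := by
  obtain ⟨a, rfl⟩ := LieSubmodule.Quotient.surjective_mk' (DKIdeal k 3) u
  set S : LieSubalgebra k (FreeLieAlgebra k (DKGen 3)) :=
    { carrier := {a | ⁅c3 k, DKmkHom k a⁆ = 0}
      add_mem' := by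
        intro a b ha hb
        simp only [Set.mem_setOf_eq] at *
        rw [map_add, lie_add, ha, hb, add_zero]
      zero_mem' := by
        simp only [Set.mem_setOf_eq, map_zero, lie_zero]
      smul_mem' := by
        intro t a ha
        simp only [Set.mem_setOf_eq] at *
        rw [map_smul, lie_smul, ha, smul_zero]
      lie_mem' := by
        intro a b ha hb
        simp only [Set.mem_setOf_eq] at *
        rw [LieHom.map_lie, leibniz_lie, ha, hb, zero_lie, lie_zero, add_zero] } with hS
  have := freeLie_mem_lieSubalgebra k S (fun g => ?_) a
  · exact this
  · show ⁅c3 k, DKmkHom k (of k g)⁆ = 0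
    obtain ⟨⟨i, j⟩, hij⟩ := g
    have : DKmkHom k (of k (⟨(i, j), hij⟩ : DKGen 3)) = T k 3 i j := by
      rw [T, dkOf, dif_pos hij]
      rfl
    rw [this]
    exact lie_c3_T k i j hij

theorem c3_central' (u : DK k 3) : ⁅u, c3 k⁆ = 0 := by
  rw [← lie_skew, c3_central, neg_zero]

end Relations

section Homs

theorem no4 : ∀ i j l m : Fin 3,
    ¬(i ≠ j ∧ i ≠ l ∧ i ≠ m ∧ j ≠ l ∧ j ≠ m ∧ l ≠ m) := by decide

theorem fin3_pairs : ∀ i j : Fin 3, i ≠ j →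
    (i = 0 ∧ j = 1) ∨ (i = 1 ∧ j = 0) ∨ (i = 0 ∧ j = 2) ∨ (i = 2 ∧ j = 0)
      ∨ (i = 1 ∧ j = 2) ∨ (i = 2 ∧ j = 1) := by decide

theorem fin3_triples : ∀ i j l : Fin 3, i ≠ j → i ≠ l → j ≠ l →
    (i = 0 ∧ j = 1 ∧ l = 2) ∨ (i = 1 ∧ j = 0 ∧ l = 2) ∨ (i = 0 ∧ j = 2 ∧ l = 1)
      ∨ (i = 2 ∧ j = 0 ∧ l = 1) ∨ (i = 1 ∧ j = 2 ∧ l = 0) ∨ (i = 2 ∧ j = 1 ∧ l = 0) := by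
  decide

theorem lie_k (a b : k) : ⁅a, b⁆ = 0 := by
  rw [Ring.lie_def]; ring

noncomputable def f1 : DKGen 3 → k := fun p =>
  if (p.val.1 = 1 ∧ p.val.2 = 2) ∨ (p.val.1 = 2 ∧ p.val.2 = 1) then 1 else 0

theorem hrels1 : ∀ r ∈ DKRels k 3, (lift k (f1 k)) r = 0 := by
  rintro r ((⟨i, j, hij, rfl⟩ | ⟨i, j, l, h1, h2, h3, rfl⟩) | ⟨i, j, l, m, h1, h2, h3, h4, h5, h6, rfl⟩)
  · erw [map_sub, dkOf, dif_pos hij, dkOf, dif_pos (Ne.symm hij),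
      lift_of_apply, lift_of_apply]
    show (if (i = 1 ∧ j = 2) ∨ (i = 2 ∧ j = 1) then (1:k) else 0)
      - (if (j = 1 ∧ i = 2) ∨ (j = 2 ∧ i = 1) then (1:k) else 0) = 0
    rw [if_congr (show ((i = 1 ∧ j = 2) ∨ (i = 2 ∧ j = 1)) ↔
        ((j = 1 ∧ i = 2) ∨ (j = 2 ∧ i = 1)) by tauto) rfl rfl, sub_self]
  · rw [LieHom.map_lie]
    exact lie_k k _ _
  · exact absurd ⟨h1, h2, h3, h4, h5, h6⟩ (no4 i j l m)

noncomputable def φ1 : DK k 3 →ₗ⁅k⁆ k := DKdesc k (f1 k) (hrels1 k)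

noncomputable def f2 : DKGen 3 → FL k := fun p =>
  if (p.val.1 = 0 ∧ p.val.2 = 1) ∨ (p.val.1 = 1 ∧ p.val.2 = 0) then of k 0
  else if (p.val.1 = 0 ∧ p.val.2 = 2) ∨ (p.val.1 = 2 ∧ p.val.2 = 0) then of k 1
  else -of k 0 - of k 1

theorem f2_sym (i j : Fin 3) (hij : i ≠ j) (hji : j ≠ i) :
    f2 k ⟨(i, j), hij⟩ = f2 k ⟨(j, i), hji⟩ := by
  show (if (i = 0 ∧ j = 1) ∨ (i = 1 ∧ j = 0) then of k 0
    else if (i = 0 ∧ j = 2) ∨ (i = 2 ∧ j = 0) then of k 1 else -of k 0 - of k 1) = _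
  rw [if_congr (show ((i = 0 ∧ j = 1) ∨ (i = 1 ∧ j = 0)) ↔
      ((j = 0 ∧ i = 1) ∨ (j = 1 ∧ i = 0)) by tauto) rfl
    (if_congr (show ((i = 0 ∧ j = 2) ∨ (i = 2 ∧ j = 0)) ↔
      ((j = 0 ∧ i = 2) ∨ (j = 2 ∧ i = 0)) by tauto) rfl rfl)]
  rfl

theorem hrels2 : ∀ r ∈ DKRels k 3, (lift k (f2 k)) r = 0 := by
  rintro r ((⟨i, j, hij, rfl⟩ | ⟨i, j, l, h1, h2, h3, rfl⟩) | ⟨i, j, l, m, h1, h2, h3, h4, h5, h6, rfl⟩)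
  · erw [map_sub, dkOf, dif_pos hij, dkOf, dif_pos (Ne.symm hij),
      lift_of_apply, lift_of_apply, f2_sym k i j hij (Ne.symm hij), sub_self]
  · erw [LieHom.map_lie, map_add, dkOf, dif_pos h1, dkOf, dif_pos h2,
      dkOf, dif_pos (Ne.symm h3), lift_of_apply, lift_of_apply, lift_of_apply]
    rcases fin3_triples i j l h1 h2 h3 with
      ⟨rfl,rfl,rfl⟩|⟨rfl,rfl,rfl⟩|⟨rfl,rfl,rfl⟩|⟨rfl,rfl,rfl⟩|⟨rfl,rfl,rfl⟩|⟨rfl,rfl,rfl⟩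
    · show ⁅of k 0, of k 1 + (-of k 0 - of k 1)⁆ = 0
      have h : of k 1 + (-of k 0 - of k 1) = -of k (0 : Fin 2) := by abel
      rw [h, lie_neg, lie_self, neg_zero]
    · show ⁅of k 0, (-of k 0 - of k 1) + of k 1⁆ = 0
      have h : (-of k 0 - of k 1) + of k 1 = -of k (0 : Fin 2) := by abel
      rw [h, lie_neg, lie_self, neg_zero]
    · show ⁅of k 1, of k 0 + (-of k 0 - of k 1)⁆ = 0
      have h : of k 0 + (-of k 0 - of k 1) = -of k (1 : Fin 2) := by abel
      rw [h, lie_neg, lie_self, neg_zero]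
    · show ⁅of k 1, (-of k 0 - of k 1) + of k 0⁆ = 0
      have h : (-of k 0 - of k 1) + of k 0 = -of k (1 : Fin 2) := by abel
      rw [h, lie_neg, lie_self, neg_zero]
    · show ⁅-of k 0 - of k 1, of k 0 + of k 1⁆ = 0
      have h : -of k 0 - of k 1 = -(of k (0 : Fin 2) + of k 1) := by abel
      rw [h, neg_lie, lie_self, neg_zero]
    · show ⁅-of k 0 - of k 1, of k 1 + of k 0⁆ = 0
      have h : -of k 0 - of k 1 = -(of k (1 : Fin 2) + of k 0) := by abel
      rw [h, neg_lie, lie_self, neg_zero]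
  · exact absurd ⟨h1, h2, h3, h4, h5, h6⟩ (no4 i j l m)

noncomputable def φ2 : DK k 3 →ₗ⁅k⁆ FL k := DKdesc k (f2 k) (hrels2 k)

noncomputable def gH : FL k →ₗ⁅k⁆ DK k 3 :=
  lift k fun i : Fin 2 => if i = 0 then T k 3 0 1 else T k 3 0 2

theorem gH_of0 : gH k (of k 0) = T k 3 0 1 := by
  rw [gH, lift_of_apply, if_pos rfl]

theorem gH_of1 : gH k (of k 1) = T k 3 0 2 := by
  rw [gH, lift_of_apply, if_neg (by decide)]

theorem φ2_gH (v : FL k) : φ2 k (gH k v) = v := by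
  have h : (φ2 k).comp (gH k) = LieHom.id := by
    apply hom_ext
    intro x
    fin_cases x
    · show φ2 k (gH k (of k 0)) = of k 0
      rw [gH_of0, φ2, DKdesc_T k (f2 k) (hrels2 k) 0 1 (by decide)]
      rfl
    · show φ2 k (gH k (of k 1)) = of k 1
      rw [gH_of1, φ2, DKdesc_T k (f2 k) (hrels2 k) 0 2 (by decide)]
      rfl
  exact LieHom.congr_fun h v

end Homs

section Rho

theorem DKmk_of (i j : Fin 3) (hij : i ≠ j) :
    DKmkHom k (of k (⟨(i, j), hij⟩ : DKGen 3)) = T k 3 i j := by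
  rw [T, dkOf, dif_pos hij]
  rfl

noncomputable def ρ : DK k 3 →ₗ⁅k⁆ DK k 3 where
  toFun u := φ1 k u • c3 k + gH k (φ2 k u)
  map_add' u v := by
    show φ1 k (u + v) • c3 k + gH k (φ2 k (u + v))
      = (φ1 k u • c3 k + gH k (φ2 k u)) + (φ1 k v • c3 k + gH k (φ2 k v))
    rw [map_add, map_add, map_add, add_smul]
    abel
  map_smul' t u := by
    show φ1 k (t • u) • c3 k + gH k (φ2 k (t • u))
      = t • (φ1 k u • c3 k + gH k (φ2 k u))
    rw [map_smul, map_smul, map_smul, smul_assoc, ← smul_add]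
  map_lie' := by
    intro u v
    show φ1 k ⁅u, v⁆ • c3 k + gH k (φ2 k ⁅u, v⁆)
      = ⁅φ1 k u • c3 k + gH k (φ2 k u), φ1 k v • c3 k + gH k (φ2 k v)⁆
    rw [LieHom.map_lie, LieHom.map_lie, LieHom.map_lie, lie_k, zero_smul, zero_add]
    simp only [add_lie, lie_add, smul_lie, lie_smul, c3_central, c3_central',
      smul_zero, zero_add, add_zero]

theorem ρ_T (i j : Fin 3) (hij : i ≠ j) : ρ k (T k 3 i j) = T k 3 i j := by
  show φ1 k (T k 3 i j) • c3 k + gH k (φ2 k (T k 3 i j)) = T k 3 i j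
  rw [φ1, φ2, DKdesc_T k (f1 k) (hrels1 k) i j hij, DKdesc_T k (f2 k) (hrels2 k) i j hij]
  rcases fin3_pairs i j hij with
    ⟨rfl,rfl⟩|⟨rfl,rfl⟩|⟨rfl,rfl⟩|⟨rfl,rfl⟩|⟨rfl,rfl⟩|⟨rfl,rfl⟩
  · simp only [f1, f2]
    rw [if_neg (by decide), if_pos (by decide), zero_smul, zero_add, gH_of0]
  · simp only [f1, f2]
    rw [if_neg (by decide), if_pos (by decide), zero_smul, zero_add, gH_of0,
      ← T_symm k 0 1]
  · simp only [f1, f2]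
    rw [if_neg (by decide), if_neg (by decide), if_pos (by decide), zero_smul, zero_add, gH_of1]
  · simp only [f1, f2]
    rw [if_neg (by decide), if_neg (by decide), if_pos (by decide), zero_smul, zero_add, gH_of1,
      ← T_symm k 0 2]
  · simp only [f1, f2]
    rw [if_pos (by decide), if_neg (by decide), if_neg (by decide), one_smul,
      map_sub, map_neg, gH_of0, gH_of1, c3]
    abel
  · simp only [f1, f2]
    rw [if_pos (by decide), if_neg (by decide), if_neg (by decide), one_smul,
      map_sub, map_neg, gH_of0, gH_of1, c3, ← T_symm k 1 2]
    abel

theorem ρ_id (u : DK k 3) : ρ k u = u := by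
  have h : (ρ k).comp (DKmkHom k) = DKmkHom k := by
    apply hom_ext
    rintro ⟨⟨i, j⟩, hij⟩
    show ρ k (DKmkHom k (of k ⟨(i, j), hij⟩)) = DKmkHom k (of k ⟨(i, j), hij⟩)
    rw [DKmk_of k i j hij]
    exact ρ_T k i j hij
  obtain ⟨a, rfl⟩ := LieSubmodule.Quotient.surjective_mk' (DKIdeal k 3) u
  exact LieHom.congr_fun h a

end Rho

theorem dk3_center_eq_span' :
    (LieAlgebra.center k (DK k 3)).toSubmodule =
      Submodule.span k {T k 3 0 1 + T k 3 0 2 + T k 3 1 2} := by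
  apply le_antisymm
  · intro z hz
    have hz' : ∀ x : DK k 3, ⁅x, z⁆ = 0 :=
      (LieModule.mem_maxTrivSubmodule k (DK k 3) (DK k 3) z).mp hz
    have hw : φ2 k z = 0 := by
      apply centerFL
      intro v
      have h1 : ⁅z, gH k v⁆ = 0 := by
        rw [← lie_skew, hz' (gH k v), neg_zero]
      have h2 := congrArg (φ2 k) h1
      rw [LieHom.map_lie, map_zero, φ2_gH] at h2
      exact h2
    have hid := (ρ_id k z).symm
    have hρ : ρ k z = φ1 k z • c3 k + gH k (φ2 k z) := rfl
    rw [hρ, hw, map_zero, add_zero] at hid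
    show z ∈ Submodule.span k {c3 k}
    exact Submodule.mem_span_singleton.mpr ⟨φ1 k z, hid.symm⟩
  · rw [Submodule.span_le, Set.singleton_subset_iff]
    show (c3 k) ∈ (LieAlgebra.center k (DK k 3)).toSubmodule
    exact (LieModule.mem_maxTrivSubmodule k (DK k 3) (DK k 3) (c3 k)).mpr
      (fun x => c3_central' k x)


/-- The center of the Drinfeld–Kohno Lie algebra `𝔱_3` is one-dimensional,
generated by `c = t_{12} + t_{13} + t_{23}`: it equals the `k`-linear span of `c`.
(Strand `i ∈ {1, 2, 3}` corresponds to `(i - 1 : Fin 3)`.) -/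
theorem dk3_center_eq_span :
    (LieAlgebra.center k (DK k 3)).toSubmodule =
      Submodule.span k {T k 3 0 1 + T k 3 0 2 + T k 3 1 2} :=
  dk3_center_eq_span' k
end

section
/- There is a canonical Lie algebra isomorphism 𝔱_2^Γ ≅ k·c ⊕ 𝔣_{N+1}: precisely, there exists a Lie algebra isomorphism φ : FreeLieAlgebra(k, Fin (N+1)) × k → 𝔱_2^Γ (where k carries the abelian Lie bracket and the product the componentwise bracket) such that φ sends (generator indexed by 0, 0) to t_{01}, (generator indexed by a+1, 0) to t_{12}^{ā} for each 0 ≤ a ≤ N−1 (ā denoting the class of a in Γ), and (0, 1) to c := t_{01} + t_{02} + Σ_{α ∈ Γ} t_{12}^α. -/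
set_option linter.unusedSectionVars false

/-! The cyclotomic Drinfeld–Kohno Lie algebras `𝔱_n^Γ` for `Γ = ℤ/Nℤ` (Definition 3.22).
The non-frozen strands `1, …, n` are indexed by `Fin n` (strand `i` corresponds to
`(i - 1 : Fin n)`), and `0` denotes the frozen strand. -/

open FreeLieAlgebra

variable (k : Type) [Field k] [CharZero k] (N : ℕ) [NeZero N]

/-- Generators of `𝔱_n^Γ`: the `t_{0i}` for `1 ≤ i ≤ n` and the `t_{ij}^α` for
`1 ≤ i, j ≤ n`, `i ≠ j`, `α ∈ Γ = ℤ/Nℤ`. -/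
def CGen (n : ℕ) : Type :=
  Fin n ⊕ ({p : Fin n × Fin n // p.1 ≠ p.2} × ZMod N)

/-- The generator `t_{0i}` in the free Lie algebra. -/
noncomputable def cT0 (n : ℕ) (i : Fin n) : FreeLieAlgebra k (CGen N n) :=
  FreeLieAlgebra.of k (Sum.inl i : CGen N n)

/-- The generator `t_{ij}^α` in the free Lie algebra (junk value `0` if `i = j`). -/
noncomputable def cT (n : ℕ) (i j : Fin n) (α : ZMod N) : FreeLieAlgebra k (CGen N n) :=
  if h : i ≠ j then FreeLieAlgebra.of k (Sum.inr (⟨(i, j), h⟩, α) : CGen N n) else 0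

/-- The set of defining relations of the cyclotomic Drinfeld–Kohno Lie algebra
(Definition 3.22). -/
def CRels (n : ℕ) : Set (FreeLieAlgebra k (CGen N n)) :=
  -- (a) t_{ij}^α = t_{ji}^{−α}
  {x | ∃ (i j : Fin n) (α : ZMod N), i ≠ j ∧ x = cT k N n i j α - cT k N n j i (-α)} ∪
  -- (b) [t_{0i}, t_{jk}^α] = 0
  {x | ∃ (i j l : Fin n) (α : ZMod N), i ≠ j ∧ i ≠ l ∧ j ≠ l ∧
      x = ⁅cT0 k N n i, cT k N n j l α⁆} ∪
  -- (b') [t_{ij}^α, t_{kl}^β] = 0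
  {x | ∃ (i j l m : Fin n) (α β : ZMod N),
      i ≠ j ∧ i ≠ l ∧ i ≠ m ∧ j ≠ l ∧ j ≠ m ∧ l ≠ m ∧
      x = ⁅cT k N n i j α, cT k N n l m β⁆} ∪
  -- (c) [t_{ij}^α, t_{ik}^{α+β} + t_{jk}^β] = 0
  {x | ∃ (i j l : Fin n) (α β : ZMod N), i ≠ j ∧ i ≠ l ∧ j ≠ l ∧
      x = ⁅cT k N n i j α, cT k N n i l (α + β) + cT k N n j l β⁆} ∪
  -- (d) [t_{0i}, t_{0j} + Σ_α t_{ij}^α] = 0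
  {x | ∃ i j : Fin n, i ≠ j ∧
      x = ⁅cT0 k N n i, cT0 k N n j + ∑ α : ZMod N, cT k N n i j α⁆} ∪
  -- (e) [t_{0i} + t_{0j} + Σ_β t_{ij}^β, t_{ij}^α] = 0
  {x | ∃ (i j : Fin n) (α : ZMod N), i ≠ j ∧
      x = ⁅cT0 k N n i + cT0 k N n j + ∑ β : ZMod N, cT k N n i j β, cT k N n i j α⁆}

/-- The Lie ideal generated by the cyclotomic Drinfeld–Kohno relations. -/
noncomputable def CIdeal (n : ℕ) : LieIdeal k (FreeLieAlgebra k (CGen N n)) :=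
  LieSubmodule.lieSpan k (FreeLieAlgebra k (CGen N n)) (CRels k N n)

/-- The cyclotomic Drinfeld–Kohno Lie algebra `𝔱_n^Γ`. -/
noncomputable def Cyc (n : ℕ) : Type :=
  FreeLieAlgebra k (CGen N n) ⧸ CIdeal k N n

noncomputable instance (n : ℕ) : LieRing (Cyc k N n) :=
  inferInstanceAs (LieRing (FreeLieAlgebra k (CGen N n) ⧸ CIdeal k N n))

noncomputable instance (n : ℕ) : LieAlgebra k (Cyc k N n) :=
  inferInstanceAs (LieAlgebra k (FreeLieAlgebra k (CGen N n) ⧸ CIdeal k N n))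

/-- The generator `t_{0i}` of `𝔱_n^Γ`. -/
noncomputable def CT0 (n : ℕ) (i : Fin n) : Cyc k N n :=
  LieSubmodule.Quotient.mk' (CIdeal k N n) (cT0 k N n i)

/-- The generator `t_{ij}^α` of `𝔱_n^Γ`. -/
noncomputable def CT (n : ℕ) (i j : Fin n) (α : ZMod N) : Cyc k N n :=
  LieSubmodule.Quotient.mk' (CIdeal k N n) (cT k N n i j α)

section ProdLie

variable {R L M : Type} [CommRing R] [LieRing L] [LieAlgebra R L] [LieRing M] [LieAlgebra R M]

/-- The product of two Lie rings, with componentwise bracket. -/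
instance Prod.instLieRing : LieRing (L × M) where
  bracket x y := (⁅x.1, y.1⁆, ⁅x.2, y.2⁆)
  add_lie x y z := Prod.ext (add_lie x.1 y.1 z.1) (add_lie x.2 y.2 z.2)
  lie_add x y z := Prod.ext (lie_add x.1 y.1 z.1) (lie_add x.2 y.2 z.2)
  lie_self x := Prod.ext (lie_self x.1) (lie_self x.2)
  leibniz_lie x y z := Prod.ext (leibniz_lie x.1 y.1 z.1) (leibniz_lie x.2 y.2 z.2)

/-- The product of two Lie algebras, with componentwise bracket. -/
instance Prod.instLieAlgebra : LieAlgebra R (L × M) where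
  lie_smul t x y := Prod.ext (lie_smul t x.1 y.1) (lie_smul t x.2 y.2)

end ProdLie

attribute [local instance 100] LieRing.ofAssociativeRing

/-! ### Auxiliary constructions for the proof -/

section AuxProof

/-- Any Lie subalgebra of a free Lie algebra containing all generators is everything. -/
theorem lieHom_sum {L L' : Type} [LieRing L] [LieAlgebra k L] [LieRing L'] [LieAlgebra k L']
    (f : L →ₗ⁅k⁆ L') {ι : Type} (s : Finset ι) (g : ι → L) :
    f (∑ i ∈ s, g i) = ∑ i ∈ s, f (g i) :=
  map_sum f.toLinearMap g s

theorem mem_of_forall_of_mem {X : Type} (S : LieSubalgebra k (FreeLieAlgebra k X))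
    (h : ∀ x, FreeLieAlgebra.of k x ∈ S) (z : FreeLieAlgebra k X) : z ∈ S := by
  let G : FreeLieAlgebra k X →ₗ⁅k⁆ S := FreeLieAlgebra.lift k fun x => ⟨FreeLieAlgebra.of k x, h x⟩
  have hG : S.incl.comp G = LieHom.id := FreeLieAlgebra.hom_ext fun x => by
    simp [G, LieSubalgebra.coe_incl]
  have h2 : S.incl (G z) = z := by
    have := DFunLike.congr_fun hG z
    simpa using this
  rw [← h2]
  exact (G z).2

/-- The canonical equivalence `ZMod N ≃ Fin N`. -/
def zmodFinEquiv : ZMod N ≃ Fin N where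
  toFun α := ⟨α.val, ZMod.val_lt α⟩
  invFun a := ((a : ℕ) : ZMod N)
  left_inv α := ZMod.natCast_rightInverse α
  right_inv a := by ext; simp [ZMod.val_natCast_of_lt a.2]

theorem sum_zmod {M : Type} [AddCommMonoid M] (f : Fin N → M) :
    ∑ α : ZMod N, f (zmodFinEquiv N α) = ∑ a : Fin N, f a :=
  Fintype.sum_equiv (zmodFinEquiv N) _ _ fun _ => rfl

theorem sum_zmod' {M : Type} [AddCommMonoid M] (f : ZMod N → M) :
    ∑ a : Fin N, f ((a : ℕ) : ZMod N) = ∑ α : ZMod N, f α :=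
  Fintype.sum_equiv (zmodFinEquiv N).symm _ _ fun _ => rfl

theorem sum_zmod_neg {M : Type} [AddCommMonoid M] (f : ZMod N → M) :
    ∑ α : ZMod N, f (-α) = ∑ α : ZMod N, f α :=
  Fintype.sum_equiv (Equiv.neg (ZMod N)) _ _ fun _ => rfl

/-- The quotient map as a morphism of Lie algebras. -/
noncomputable def mkHom : FreeLieAlgebra k (CGen N 2) →ₗ⁅k⁆ Cyc k N 2 :=
  { (LieSubmodule.Quotient.mk' (CIdeal k N 2)).toLinearMap with
    map_lie' := fun {x y} => (LieSubmodule.Quotient.mk_bracket (CIdeal k N 2) x y) }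

theorem mkHom_apply (x : FreeLieAlgebra k (CGen N 2)) :
    mkHom k N x = LieSubmodule.Quotient.mk' (CIdeal k N 2) x := rfl

theorem mkHom_surjective : Function.Surjective (mkHom k N) :=
  LieSubmodule.Quotient.surjective_mk' (CIdeal k N 2)

theorem mk_rel {x : FreeLieAlgebra k (CGen N 2)} (hx : x ∈ CRels k N 2) :
    mkHom k N x = 0 :=
  (LieSubmodule.Quotient.mk_eq_zero _).mpr (LieSubmodule.subset_lieSpan hx)

theorem cT_apply (i j : Fin 2) (h : i ≠ j) (α : ZMod N) :
    cT k N 2 i j α = FreeLieAlgebra.of k (Sum.inr (⟨(i, j), h⟩, α) : CGen N 2) := dif_pos h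

theorem CT_mk (i j : Fin 2) (α : ZMod N) : CT k N 2 i j α = mkHom k N (cT k N 2 i j α) := rfl

theorem CT0_mk (i : Fin 2) : CT0 k N 2 i = mkHom k N (cT0 k N 2 i) := rfl

theorem relA (i j : Fin 2) (h : i ≠ j) (α : ZMod N) :
    CT k N 2 i j α = CT k N 2 j i (-α) := by
  have hm : cT k N 2 i j α - cT k N 2 j i (-α) ∈ CRels k N 2 :=
    Or.inl <| Or.inl <| Or.inl <| Or.inl <| Or.inl ⟨i, j, α, h, rfl⟩
  have h0 := mk_rel k N hm
  rw [map_sub] at h0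
  exact sub_eq_zero.mp h0

theorem relD (i j : Fin 2) (h : i ≠ j) :
    ⁅CT0 k N 2 i, CT0 k N 2 j + ∑ α : ZMod N, CT k N 2 i j α⁆ = 0 := by
  have hm : ⁅cT0 k N 2 i, cT0 k N 2 j + ∑ α : ZMod N, cT k N 2 i j α⁆ ∈ CRels k N 2 :=
    Or.inl <| Or.inr ⟨i, j, h, rfl⟩
  have h0 := mk_rel k N hm
  rwa [LieHom.map_lie, map_add, lieHom_sum] at h0

theorem relE (i j : Fin 2) (h : i ≠ j) (α : ZMod N) :
    ⁅CT0 k N 2 i + CT0 k N 2 j + ∑ β : ZMod N, CT k N 2 i j β, CT k N 2 i j α⁆ = 0 := by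
  have hm : ⁅cT0 k N 2 i + cT0 k N 2 j + ∑ β : ZMod N, cT k N 2 i j β, cT k N 2 i j α⁆
      ∈ CRels k N 2 := Or.inr ⟨i, j, α, h, rfl⟩
  have h0 := mk_rel k N hm
  rwa [LieHom.map_lie, map_add, map_add, lieHom_sum] at h0

/-- The morphism from the free Lie algebra on `N + 1` generators. -/
noncomputable def fHom : FreeLieAlgebra k (Fin (N + 1)) →ₗ⁅k⁆ Cyc k N 2 :=
  FreeLieAlgebra.lift k fun i =>
    Fin.cases (CT0 k N 2 0) (fun a => CT k N 2 0 1 ((a : ℕ) : ZMod N)) i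

/-- The central element `c`. -/
noncomputable def Cc : Cyc k N 2 :=
  CT0 k N 2 0 + CT0 k N 2 1 + ∑ α : ZMod N, CT k N 2 0 1 α

theorem Cc_def : Cc k N = CT0 k N 2 0 + CT0 k N 2 1 + ∑ α : ZMod N, CT k N 2 0 1 α := rfl

theorem Cc_lie_CT0_zero : ⁅Cc k N, CT0 k N 2 0⁆ = 0 := by
  have h := relD k N 0 1 (by decide)
  have h2 : ⁅CT0 k N 2 0, Cc k N⁆ = 0 := by
    rw [Cc_def, add_assoc, lie_add, lie_self, zero_add, h]
  rw [← lie_skew, h2, neg_zero]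

theorem Cc_lie_CT0_one : ⁅Cc k N, CT0 k N 2 1⁆ = 0 := by
  have h := relD k N 1 0 (by decide)
  have hsum : ∑ α : ZMod N, CT k N 2 1 0 α = ∑ α : ZMod N, CT k N 2 0 1 α := by
    rw [← sum_zmod_neg N (fun α => CT k N 2 0 1 α)]
    exact Finset.sum_congr rfl fun α _ => relA k N 1 0 (by decide) α
  rw [hsum] at h
  have h2 : ⁅CT0 k N 2 1, Cc k N⁆ = 0 := by
    have hC : Cc k N = CT0 k N 2 1 + (CT0 k N 2 0 + ∑ α : ZMod N, CT k N 2 0 1 α) := by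
      rw [Cc_def]; abel
    rw [hC, lie_add, lie_self, zero_add, h]
  rw [← lie_skew, h2, neg_zero]

theorem Cc_lie_CT (i j : Fin 2) (h : i ≠ j) (α : ZMod N) : ⁅Cc k N, CT k N 2 i j α⁆ = 0 := by
  fin_cases i <;> fin_cases j <;> first
  | exact absurd rfl h
  | (rw [Cc_def]; exact relE k N 0 1 (by decide) α)
  | exact show ⁅Cc k N, CT k N 2 1 0 α⁆ = 0 by
      rw [relA k N 1 0 (by decide) α, Cc_def]; exact relE k N 0 1 (by decide) (-α)

theorem Cc_lie (y : Cyc k N 2) : ⁅Cc k N, y⁆ = 0 := by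
  obtain ⟨x, rfl⟩ := mkHom_surjective k N y
  let S : LieSubalgebra k (FreeLieAlgebra k (CGen N 2)) :=
    { carrier := {z | ⁅Cc k N, mkHom k N z⁆ = 0}
      add_mem' := fun {a b} ha hb => by
        simp only [Set.mem_setOf_eq] at *
        rw [map_add, lie_add, ha, hb, add_zero]
      zero_mem' := by simp only [Set.mem_setOf_eq, map_zero, lie_zero]
      smul_mem' := fun c a ha => by
        simp only [Set.mem_setOf_eq] at *
        rw [map_smul, lie_smul, ha, smul_zero]
      lie_mem' := fun {a b} ha hb => by
        simp only [Set.mem_setOf_eq] at *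
        rw [LieHom.map_lie, leibniz_lie, ha, hb, zero_lie, lie_zero, add_zero] }
  have key : ∀ g : Fin 2 ⊕ ({p : Fin 2 × Fin 2 // p.1 ≠ p.2} × ZMod N),
      FreeLieAlgebra.of k (g : CGen N 2) ∈ S := by
    rintro (i | ⟨⟨⟨i, j⟩, hij⟩, α⟩)
    · show ⁅Cc k N, mkHom k N (cT0 k N 2 i)⁆ = 0
      rw [← CT0_mk]
      fin_cases i
      · exact Cc_lie_CT0_zero k N
      · exact Cc_lie_CT0_one k N
    · show ⁅Cc k N, mkHom k N (FreeLieAlgebra.of k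
        (Sum.inr (⟨(i, j), hij⟩, α) : CGen N 2))⁆ = 0
      have hC := Cc_lie_CT k N i j hij α
      rw [CT_mk, cT_apply k N i j hij α] at hC
      exact hC
  exact mem_of_forall_of_mem k S (fun g => key g) x

theorem lie_Cc (y : Cyc k N 2) : ⁅y, Cc k N⁆ = 0 := by
  rw [← lie_skew, Cc_lie, neg_zero]

/-- The Lie algebra morphism `FreeLieAlgebra k (Fin (N+1)) × k → 𝔱_2^Γ`. -/
noncomputable def phiHom : (FreeLieAlgebra k (Fin (N + 1)) × k) →ₗ⁅k⁆ Cyc k N 2 where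
  toFun p := fHom k N p.1 + p.2 • Cc k N
  map_add' p q := by
    show fHom k N (p.1 + q.1) + (p.2 + q.2) • Cc k N = _
    rw [map_add, add_smul]; abel
  map_smul' c p := by
    show fHom k N (c • p.1) + (c * p.2) • Cc k N = c • _
    rw [map_smul, mul_smul, smul_add]
  map_lie' := by
    intro p q
    show fHom k N ⁅p.1, q.1⁆ + ⁅p.2, q.2⁆ • Cc k N =
      ⁅fHom k N p.1 + p.2 • Cc k N, fHom k N q.1 + q.2 • Cc k N⁆
    have hk : ⁅p.2, q.2⁆ = 0 := by rw [Ring.lie_def, mul_comm, sub_self]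
    rw [hk, zero_smul, add_zero, LieHom.map_lie, lie_add, lie_smul, lie_Cc, smul_zero,
      add_zero, add_lie, smul_lie, Cc_lie, smul_zero, add_zero]

/-- Values of the inverse morphism on generators. -/
noncomputable def gmap : CGen N 2 → FreeLieAlgebra k (Fin (N + 1)) × k := fun g =>
  Sum.elim
    (fun i => if i = 0 then ((FreeLieAlgebra.of k (0 : Fin (N + 1)), 0) :
        FreeLieAlgebra k (Fin (N + 1)) × k)
      else (-(FreeLieAlgebra.of k (0 : Fin (N + 1))) -
        ∑ a : Fin N, FreeLieAlgebra.of k a.succ, 1))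
    (fun q => if q.1.1.1 = 0 then
        ((FreeLieAlgebra.of k ((zmodFinEquiv N q.2).succ), 0) :
          FreeLieAlgebra k (Fin (N + 1)) × k)
      else (FreeLieAlgebra.of k ((zmodFinEquiv N (-q.2)).succ), 0))
    g

theorem gmap_inl (i : Fin 2) : gmap k N (Sum.inl i : CGen N 2) =
    if i = 0 then ((FreeLieAlgebra.of k (0 : Fin (N + 1)), 0) :
        FreeLieAlgebra k (Fin (N + 1)) × k)
      else (-(FreeLieAlgebra.of k (0 : Fin (N + 1))) -
        ∑ a : Fin N, FreeLieAlgebra.of k a.succ, 1) := rfl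

theorem gmap_inr (i j : Fin 2) (h : i ≠ j) (α : ZMod N) :
    gmap k N (Sum.inr (⟨(i, j), h⟩, α) : CGen N 2) =
    if i = 0 then
        ((FreeLieAlgebra.of k ((zmodFinEquiv N α).succ), 0) :
          FreeLieAlgebra k (Fin (N + 1)) × k)
      else (FreeLieAlgebra.of k ((zmodFinEquiv N (-α)).succ), 0) := rfl

/-- The inverse morphism on the free Lie algebra. -/
noncomputable def psi0 : FreeLieAlgebra k (CGen N 2) →ₗ⁅k⁆ (FreeLieAlgebra k (Fin (N + 1)) × k) :=
  FreeLieAlgebra.lift k (gmap k N)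

theorem psi0_cT0 (i : Fin 2) : psi0 k N (cT0 k N 2 i) = gmap k N (Sum.inl i) :=
  FreeLieAlgebra.lift_of_apply _ _

theorem psi0_cT (i j : Fin 2) (h : i ≠ j) (α : ZMod N) :
    psi0 k N (cT k N 2 i j α) = gmap k N (Sum.inr (⟨(i, j), h⟩, α)) := by
  rw [cT_apply k N i j h]; exact FreeLieAlgebra.lift_of_apply _ _

theorem psi0_sum_cT01 : psi0 k N (∑ α : ZMod N, cT k N 2 0 1 α) =
    (∑ a : Fin N, FreeLieAlgebra.of k a.succ, 0) := by
  rw [lieHom_sum]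
  have : ∀ α : ZMod N, psi0 k N (cT k N 2 0 1 α) =
      ((FreeLieAlgebra.of k ((zmodFinEquiv N α).succ), 0) :
        FreeLieAlgebra k (Fin (N + 1)) × k) := fun α => by
    rw [psi0_cT k N 0 1 (by decide) α, gmap_inr, if_pos rfl]
  rw [Finset.sum_congr rfl fun α _ => this α, ← prod_mk_sum,
    sum_zmod N (fun a => FreeLieAlgebra.of k a.succ), Finset.sum_const, smul_zero]

theorem psi0_sum_cT10 : psi0 k N (∑ α : ZMod N, cT k N 2 1 0 α) =
    (∑ a : Fin N, FreeLieAlgebra.of k a.succ, 0) := by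
  rw [lieHom_sum]
  have : ∀ α : ZMod N, psi0 k N (cT k N 2 1 0 α) =
      ((FreeLieAlgebra.of k ((zmodFinEquiv N (-α)).succ), 0) :
        FreeLieAlgebra k (Fin (N + 1)) × k) := fun α => by
    rw [psi0_cT k N 1 0 (by decide) α, gmap_inr, if_neg (by decide)]
  rw [Finset.sum_congr rfl fun α _ => this α, ← prod_mk_sum,
    sum_zmod_neg N (fun α => FreeLieAlgebra.of k ((zmodFinEquiv N α).succ)),
    sum_zmod N (fun a => FreeLieAlgebra.of k a.succ), Finset.sum_const, smul_zero]

theorem fin2_three : ∀ i j l : Fin 2, i = j ∨ i = l ∨ j = l := by decide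

theorem psi0_rels : CIdeal k N 2 ≤ (psi0 k N).ker := by
  rw [CIdeal, LieSubmodule.lieSpan_le]
  intro x hx
  simp only [SetLike.mem_coe, LieHom.mem_ker]
  rcases hx with (((((⟨i, j, α, hij, rfl⟩ | ⟨i, j, l, α, h1, h2, h3, rfl⟩) |
    ⟨i, j, l, m, α, β, h1, h2, h3, h4, h5, h6, rfl⟩) | ⟨i, j, l, α, β, h1, h2, h3, rfl⟩) |
    ⟨i, j, hij, rfl⟩) | ⟨i, j, α, hij, rfl⟩)
  · -- relation (a)
    rw [map_sub, psi0_cT k N i j hij α, psi0_cT k N j i hij.symm (-α)]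
    fin_cases i <;> fin_cases j <;>
      first
      | exact absurd rfl hij
      | (rw [gmap_inr, gmap_inr]; simp [neg_neg])
  · rcases fin2_three i j l with h | h | h
    · exact absurd h h1
    · exact absurd h h2
    · exact absurd h h3
  · rcases fin2_three i j l with h | h | h
    · exact absurd h h1
    · exact absurd h h2
    · exact absurd h h4
  · rcases fin2_three i j l with h | h | h
    · exact absurd h h1
    · exact absurd h h2
    · exact absurd h h3
  · -- relation (d)
    rw [LieHom.map_lie, map_add, psi0_cT0, psi0_cT0]
    fin_cases i <;> fin_cases j <;> simp only [Fin.mk_zero, Fin.mk_one] at hij ⊢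
    · exact absurd rfl hij
    · rw [psi0_sum_cT01 k N, gmap_inl, gmap_inl, if_pos rfl, if_neg (by decide)]
      ext
      · show ⁅FreeLieAlgebra.of k (0 : Fin (N + 1)),
          (-(FreeLieAlgebra.of k (0 : Fin (N + 1))) -
            ∑ a : Fin N, FreeLieAlgebra.of k a.succ) +
          ∑ a : Fin N, FreeLieAlgebra.of k a.succ⁆ = 0
        rw [sub_add_cancel, lie_neg, lie_self, neg_zero]
      · show ⁅(0 : k), (1 : k) + 0⁆ = 0
        rw [zero_lie]
    · rw [psi0_sum_cT10 k N, gmap_inl, gmap_inl, if_neg (by decide), if_pos rfl]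
      ext
      · show ⁅-(FreeLieAlgebra.of k (0 : Fin (N + 1))) -
            ∑ a : Fin N, FreeLieAlgebra.of k a.succ,
          FreeLieAlgebra.of k (0 : Fin (N + 1)) +
            ∑ a : Fin N, FreeLieAlgebra.of k a.succ⁆ = 0
        rw [show -(FreeLieAlgebra.of k (0 : Fin (N + 1))) -
            ∑ a : Fin N, FreeLieAlgebra.of k a.succ =
          -(FreeLieAlgebra.of k (0 : Fin (N + 1)) +
            ∑ a : Fin N, FreeLieAlgebra.of k a.succ) from by abel]
        rw [neg_lie, lie_self, neg_zero]
      · show ⁅(1 : k), (0 : k) + 0⁆ = 0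
        rw [add_zero, lie_zero]
    · exact absurd rfl hij
  · -- relation (e)
    rw [LieHom.map_lie, map_add, map_add, psi0_cT0, psi0_cT0,
      psi0_cT k N i j hij α]
    have harg : gmap k N (Sum.inl i) + gmap k N (Sum.inl j) +
        psi0 k N (∑ β : ZMod N, cT k N 2 i j β) = (0, 1) := by
      fin_cases i <;> fin_cases j <;> simp only [Fin.mk_zero, Fin.mk_one] at hij ⊢
      · exact absurd rfl hij
      · rw [psi0_sum_cT01 k N, gmap_inl, gmap_inl, if_pos rfl, if_neg (by decide)]
        ext
        · show FreeLieAlgebra.of k (0 : Fin (N + 1)) +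
            (-(FreeLieAlgebra.of k (0 : Fin (N + 1))) -
              ∑ a : Fin N, FreeLieAlgebra.of k a.succ) +
            ∑ a : Fin N, FreeLieAlgebra.of k a.succ = 0
          abel
        · show (0 : k) + 1 + 0 = 1
          rw [zero_add, add_zero]
      · rw [psi0_sum_cT10 k N, gmap_inl, gmap_inl, if_neg (by decide), if_pos rfl]
        ext
        · show -(FreeLieAlgebra.of k (0 : Fin (N + 1))) -
              (∑ a : Fin N, FreeLieAlgebra.of k a.succ) +
            FreeLieAlgebra.of k (0 : Fin (N + 1)) +
            ∑ a : Fin N, FreeLieAlgebra.of k a.succ = 0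
          abel
        · show (1 : k) + 0 + 0 = 1
          rw [add_zero, add_zero]
      · exact absurd rfl hij
    rw [harg]
    have : gmap k N (Sum.inr (⟨(i, j), hij⟩, α)) =
        ((gmap k N (Sum.inr (⟨(i, j), hij⟩, α))).1, 0) := by
      fin_cases i <;> fin_cases j <;>
        first
        | exact absurd rfl hij
        | (rw [gmap_inr]; simp)
    rw [this]
    ext
    · show ⁅(0 : FreeLieAlgebra k (Fin (N + 1))), _⁆ = 0
      rw [zero_lie]
    · show ⁅(1 : k), (0 : k)⁆ = 0
      rw [lie_zero]

/-- The induced morphism `𝔱_2^Γ → FreeLieAlgebra k (Fin (N+1)) × k`. -/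
noncomputable def psiHom : Cyc k N 2 →ₗ⁅k⁆ (FreeLieAlgebra k (Fin (N + 1)) × k) :=
  { Submodule.liftQ (CIdeal k N 2).toSubmodule (psi0 k N).toLinearMap
      (fun x hx => LinearMap.mem_ker.mpr (LieHom.mem_ker.mp (psi0_rels k N hx))) with
    map_lie' := by
      rintro ⟨x⟩ ⟨y⟩
      exact (psi0 k N).map_lie x y }

theorem psiHom_mk (x : FreeLieAlgebra k (CGen N 2)) :
    psiHom k N (mkHom k N x) = psi0 k N x := rfl

theorem fHom_of_zero : fHom k N (FreeLieAlgebra.of k (0 : Fin (N + 1))) = CT0 k N 2 0 := by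
  rw [fHom, FreeLieAlgebra.lift_of_apply]
  exact Fin.cases_zero

theorem fHom_of_succ (a : Fin N) :
    fHom k N (FreeLieAlgebra.of k a.succ) = CT k N 2 0 1 ((a : ℕ) : ZMod N) := by
  rw [fHom, FreeLieAlgebra.lift_of_apply]
  exact Fin.cases_succ a

/-- The inclusion of the free factor into the product. -/
noncomputable def inlHom :
    FreeLieAlgebra k (Fin (N + 1)) →ₗ⁅k⁆ (FreeLieAlgebra k (Fin (N + 1)) × k) where
  toFun x := (x, 0)
  map_add' x y := by ext <;> simp
  map_smul' c x := by ext <;> simp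
  map_lie' := by
    intro x y
    show (⁅x, y⁆, (0 : k)) = (⁅x, y⁆, ⁅(0 : k), (0 : k)⁆)
    rw [lie_zero]

theorem psiHom_fHom (x : FreeLieAlgebra k (Fin (N + 1))) :
    psiHom k N (fHom k N x) = (x, 0) := by
  have hcomp : (psiHom k N).comp (fHom k N) = inlHom k N := by
    apply FreeLieAlgebra.hom_ext
    intro i
    induction i using Fin.cases with
    | zero =>
      show psiHom k N (fHom k N (FreeLieAlgebra.of k (0 : Fin (N + 1)))) =
        (FreeLieAlgebra.of k (0 : Fin (N + 1)), 0)
      rw [fHom_of_zero, CT0_mk, psiHom_mk, psi0_cT0, gmap_inl, if_pos rfl]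
    | succ a =>
      show psiHom k N (fHom k N (FreeLieAlgebra.of k a.succ)) =
        (FreeLieAlgebra.of k a.succ, 0)
      rw [fHom_of_succ, CT_mk, psiHom_mk, psi0_cT k N 0 1 (by decide), gmap_inr, if_pos rfl]
      have : zmodFinEquiv N (((a : ℕ) : ZMod N)) = a := by
        ext
        exact ZMod.val_natCast_of_lt a.2
      rw [this]
  exact DFunLike.congr_fun hcomp x

theorem psiHom_Cc : psiHom k N (Cc k N) = (0, 1) := by
  rw [Cc_def, CT0_mk, CT0_mk]
  have hsum : (∑ α : ZMod N, CT k N 2 0 1 α) = mkHom k N (∑ α : ZMod N, cT k N 2 0 1 α) := by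
    rw [lieHom_sum]; rfl
  rw [hsum, ← map_add, ← map_add, psiHom_mk, map_add, map_add,
    psi0_cT0, psi0_cT0, psi0_sum_cT01, gmap_inl, gmap_inl, if_pos rfl, if_neg (by decide)]
  ext
  · show FreeLieAlgebra.of k (0 : Fin (N + 1)) +
      (-(FreeLieAlgebra.of k (0 : Fin (N + 1))) - ∑ a : Fin N, FreeLieAlgebra.of k a.succ) +
      ∑ a : Fin N, FreeLieAlgebra.of k a.succ = 0
    abel
  · show (0 : k) + 1 + 0 = 1
    rw [zero_add, add_zero]

theorem psi_phi (p : FreeLieAlgebra k (Fin (N + 1)) × k) :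
    psiHom k N (phiHom k N p) = p := by
  show psiHom k N (fHom k N p.1 + p.2 • Cc k N) = p
  rw [map_add, map_smul, psiHom_fHom, psiHom_Cc]
  ext
  · show p.1 + p.2 • (0 : FreeLieAlgebra k (Fin (N + 1))) = p.1
    rw [smul_zero, add_zero]
  · show (0 : k) + p.2 • (1 : k) = p.2
    rw [zero_add, smul_eq_mul, mul_one]

theorem phi_psi (y : Cyc k N 2) : phiHom k N (psiHom k N y) = y := by
  obtain ⟨x, rfl⟩ := mkHom_surjective k N y
  have hcomp : ((phiHom k N).comp (psiHom k N)).comp (mkHom k N) = mkHom k N := by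
    apply FreeLieAlgebra.hom_ext
    intro g
    show phiHom k N (psiHom k N (mkHom k N (FreeLieAlgebra.of k g))) =
      mkHom k N (FreeLieAlgebra.of k g)
    have key : ∀ g' : Fin 2 ⊕ ({p : Fin 2 × Fin 2 // p.1 ≠ p.2} × ZMod N),
        phiHom k N (psiHom k N (mkHom k N (FreeLieAlgebra.of k (g' : CGen N 2)))) =
          mkHom k N (FreeLieAlgebra.of k (g' : CGen N 2)) := by
      rintro (i | ⟨⟨⟨i, j⟩, hij⟩, α⟩)
      · show phiHom k N (psiHom k N (mkHom k N (cT0 k N 2 i))) = mkHom k N (cT0 k N 2 i)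
        rw [psiHom_mk, psi0_cT0, ← CT0_mk]
        fin_cases i <;> simp only [Fin.mk_zero, Fin.mk_one] at *
        · rw [gmap_inl, if_pos rfl]
          show fHom k N (FreeLieAlgebra.of k (0 : Fin (N + 1))) + (0 : k) • Cc k N =
            CT0 k N 2 0
          rw [fHom_of_zero, zero_smul, add_zero]
        · rw [gmap_inl, if_neg (by decide)]
          show fHom k N (-(FreeLieAlgebra.of k (0 : Fin (N + 1))) -
              ∑ a : Fin N, FreeLieAlgebra.of k a.succ) + (1 : k) • Cc k N = CT0 k N 2 1
          rw [map_sub, map_neg, lieHom_sum, fHom_of_zero, one_smul, Cc_def]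
          have hsum2 : ∑ a : Fin N, fHom k N (FreeLieAlgebra.of k a.succ) =
              ∑ α : ZMod N, CT k N 2 0 1 α := by
            rw [Finset.sum_congr rfl fun a _ => fHom_of_succ k N a]
            exact sum_zmod' N (fun α => CT k N 2 0 1 α)
          rw [hsum2]
          abel
      · show phiHom k N (psiHom k N (mkHom k N
            (FreeLieAlgebra.of k (Sum.inr (⟨(i, j), hij⟩, α) : CGen N 2)))) =
          mkHom k N (FreeLieAlgebra.of k (Sum.inr (⟨(i, j), hij⟩, α) : CGen N 2))
        suffices key2 : phiHom k N (psiHom k N (mkHom k N (cT k N 2 i j α))) =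
            mkHom k N (cT k N 2 i j α) by
          rw [cT_apply k N i j hij α] at key2; exact key2
        rw [psiHom_mk, psi0_cT k N i j hij α, ← CT_mk]
        have hval : ∀ β : ZMod N,
            phiHom k N ((FreeLieAlgebra.of k ((zmodFinEquiv N β).succ), 0)) =
              CT k N 2 0 1 β := by
          intro β
          show fHom k N (FreeLieAlgebra.of k ((zmodFinEquiv N β).succ)) + (0 : k) • Cc k N =
            CT k N 2 0 1 β
          rw [fHom_of_succ, zero_smul, add_zero]
          congr 1
          exact ZMod.natCast_rightInverse β
        fin_cases i <;> fin_cases j <;> simp only [Fin.mk_zero, Fin.mk_one] at *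
        · exact absurd rfl hij
        · rw [gmap_inr, if_pos rfl]
          exact hval α
        · rw [gmap_inr, if_neg (by decide)]
          rw [relA k N 1 0 (by decide) α]
          exact hval (-α)
        · exact absurd rfl hij
    exact key g
  exact DFunLike.congr_fun hcomp x

end AuxProof

/-- There is a canonical Lie algebra isomorphism
`𝔱_2^Γ ≅ k·c ⊕ 𝔣_{N+1}`: an isomorphism
`FreeLieAlgebra(k, Fin (N+1)) × k ≅ 𝔱_2^Γ` (with `k` carrying the abelian bracket — here
the commutator bracket of the commutative ring `k` — and the product the componentwise
bracket) sending the generator indexed by `0` to `t_{01}`, the generator indexed by `a+1`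
to `t_{12}^ā` for `0 ≤ a ≤ N−1`, and `(0, 1)` to `c = t_{01} + t_{02} + Σ_{α∈Γ} t_{12}^α`. -/
theorem cyc2_iso_freeLie_prod_center :
    ∃ φ : (FreeLieAlgebra k (Fin (N + 1)) × k) ≃ₗ⁅k⁆ Cyc k N 2,
      φ (FreeLieAlgebra.of k 0, 0) = CT0 k N 2 0 ∧
      (∀ a : Fin N, φ (FreeLieAlgebra.of k a.succ, 0) = CT k N 2 0 1 ((a : ℕ) : ZMod N)) ∧
      φ (0, 1) = CT0 k N 2 0 + CT0 k N 2 1 + ∑ α : ZMod N, CT k N 2 0 1 α := by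
  refine ⟨{ toLieHom := phiHom k N
            invFun := psiHom k N
            left_inv := psi_phi k N
            right_inv := phi_psi k N }, ?_, ?_, ?_⟩
  · show phiHom k N (FreeLieAlgebra.of k (0 : Fin (N + 1)), 0) = CT0 k N 2 0
    show fHom k N (FreeLieAlgebra.of k (0 : Fin (N + 1))) + (0 : k) • Cc k N = CT0 k N 2 0
    rw [fHom_of_zero, zero_smul, add_zero]
  · intro a
    show phiHom k N (FreeLieAlgebra.of k a.succ, 0) = CT k N 2 0 1 ((a : ℕ) : ZMod N)
    show fHom k N (FreeLieAlgebra.of k a.succ) + (0 : k) • Cc k N =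
      CT k N 2 0 1 ((a : ℕ) : ZMod N)
    rw [fHom_of_succ, zero_smul, add_zero]
  · show phiHom k N (0, 1) = CT0 k N 2 0 + CT0 k N 2 1 + ∑ α : ZMod N, CT k N 2 0 1 α
    show fHom k N 0 + (1 : k) • Cc k N = _
    rw [map_zero, one_smul, zero_add, Cc_def]
end
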